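/- arXiv:1304.1442 — 11 statements merged into one kernel-verified Lean document; each statement's English description precedes it below -/
import Mathlib

section
/- If a, b, c are nonzero integers which are pairwise coprime and pairwise distinct, then a·b² + b·c² + c·a² ≠ 3abc. -/
/-!
Reducing the equation `a * b ^ 2 + b * c ^ 2 + c * a ^ 2 = 3 * a * b * c` modulo `a` shows
`a ∣ b * c ^ 2`, so coprimality forces `a` to be a unit; by cyclic symmetry so are `b` and `c`.
For `a, b, c ∈ {±1}` the equation reads `a + b + c = 3 * a * b * c`, which holds only when
`a = b = c`.
-/

theorem IsCoprime.isUnit_of_dvd_mul_pow {R : Type*} [CommSemiring R] {a b c : R}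
    (hab : IsCoprime a b) (hac : IsCoprime a c) {n : ℕ} (h : a ∣ b * c ^ n) : IsUnit a :=
  (hab.mul_right hac.pow_right).isUnit_of_dvd' dvd_rfl h

theorem isUnit_of_add_mul_sq_eq_three_mul {R : Type*} [CommRing R] {a b c : R}
    (hab : IsCoprime a b) (hac : IsCoprime a c)
    (h : a * b ^ 2 + b * c ^ 2 + c * a ^ 2 = 3 * a * b * c) : IsUnit a :=
  hab.isUnit_of_dvd_mul_pow hac (n := 2) ⟨3 * b * c - b ^ 2 - a * c, by linear_combination h⟩

theorem Int.eq_of_isUnit_of_add_mul_sq_eq_three_mul {a b c : ℤ}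
    (ha : IsUnit a) (hb : IsUnit b) (hc : IsUnit c)
    (h : a * b ^ 2 + b * c ^ 2 + c * a ^ 2 = 3 * a * b * c) : a = b := by
  rw [Int.isUnit_iff] at ha hb hc
  rcases ha with rfl | rfl <;> rcases hb with rfl | rfl <;> rcases hc with rfl | rfl <;> omega

theorem stmt_1_general (a b c : ℤ) (hab : a ≠ b)
    (cab : IsCoprime a b) (cbc : IsCoprime b c) (cac : IsCoprime a c) :
    a * b ^ 2 + b * c ^ 2 + c * a ^ 2 ≠ 3 * a * b * c := by
  intro h
  have ua : IsUnit a := isUnit_of_add_mul_sq_eq_three_mul cab cac h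
  have ub : IsUnit b := isUnit_of_add_mul_sq_eq_three_mul cbc cab.symm (by linear_combination h)
  have uc : IsUnit c :=
    isUnit_of_add_mul_sq_eq_three_mul cac.symm cbc.symm (by linear_combination h)
  exact hab (Int.eq_of_isUnit_of_add_mul_sq_eq_three_mul ua ub uc h)

theorem stmt_1 (a b c : ℤ) (ha : a ≠ 0) (hb : b ≠ 0) (hc : c ≠ 0)
    (hab : a ≠ b) (hbc : b ≠ c) (hac : a ≠ c)
    (cab : IsCoprime a b) (cbc : IsCoprime b c) (cac : IsCoprime a c) :
    a * b ^ 2 + b * c ^ 2 + c * a ^ 2 ≠ 3 * a * b * c :=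
  stmt_1_general a b c hab cab cbc cac
end

section
/- For any rational numbers c ≠ 0 and t with t ∉ {0,1}, setting a = c(t-1)³ and b = -ct³ yields nonzero rationals a, b with (a+b+c)³ = 27abc, and a, b, c are not all equal; moreover a, b, c are pairwise distinct if and only if t ∉ {-1, 1/2, 2}. -/
/-!
Here a + b + c = -3ct(t - 1), whose cube is 27abc. The three differences factor as
a - b = c(2t - 1)q, b - c = -c(t + 1)q and a - c = c(t - 2)q with q = t² - t + 1, and q has no
root in an ordered field, so each coincidence among a, b, c pins down a single value of t.
-/

section

variable {K : Type*} [Field K] [LinearOrder K] [IsStrictOrderedRing K]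

theorem sq_sub_self_add_one_pos (t : K) : 0 < t ^ 2 - t + 1 := by
  nlinarith [sq_nonneg (2 * t - 1)]

theorem eq_iff_of_sub_eq_mul_sq_sub_self_add_one {x y c t r : K} (hc : c ≠ 0)
    (h : x - y = c * ((t - r) * (t ^ 2 - t + 1))) : x = y ↔ t = r := by
  rw [← sub_eq_zero, h, ← sub_eq_zero (a := t)]
  simp [hc, (sq_sub_self_add_one_pos t).ne']

end

theorem stmt_2 (c t : ℚ) (hc : c ≠ 0) (ht0 : t ≠ 0) (ht1 : t ≠ 1)
    (a b : ℚ) (ha : a = c * (t - 1) ^ 3) (hb : b = -c * t ^ 3) :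
    a ≠ 0 ∧ b ≠ 0 ∧ (a + b + c) ^ 3 = 27 * (a * b * c) ∧
      ¬(a = b ∧ b = c) ∧
      ((a ≠ b ∧ b ≠ c ∧ a ≠ c) ↔ (t ≠ -1 ∧ t ≠ 1/2 ∧ t ≠ 2)) := by
  have hab : a = b ↔ t = 1 / 2 :=
    eq_iff_of_sub_eq_mul_sq_sub_self_add_one (mul_ne_zero two_ne_zero hc) (by rw [ha, hb]; ring)
  have hbc : b = c ↔ t = -1 :=
    eq_iff_of_sub_eq_mul_sq_sub_self_add_one (neg_ne_zero.2 hc) (by rw [hb]; ring)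
  have hac : a = c ↔ t = 2 :=
    eq_iff_of_sub_eq_mul_sq_sub_self_add_one hc (by rw [ha]; ring)
  refine ⟨?_, ?_, by rw [ha, hb]; ring, ?_, by rw [Ne, Ne, Ne, hab, hbc, hac]; tauto⟩
  · rw [ha]; exact mul_ne_zero hc (pow_ne_zero _ (sub_ne_zero.2 ht1))
  · rw [hb]; exact mul_ne_zero (neg_ne_zero.2 hc) (pow_ne_zero _ ht0)
  · rintro ⟨h₁, h₂⟩
    have : (1 / 2 : ℚ) = -1 := (hab.1 h₁).symm.trans (hbc.1 h₂)
    norm_num at this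
end

section
/- If a, b, c are nonzero rational numbers, not all equal, with (a+b+c)³ = 27abc, then there exists a unique t ∈ ℚ \ {0,1} such that a = c(t-1)³ and b = -ct³. -/
/-! With `t = (a - 2b + c) / (2c - a - b)` one checks, using the cubic relation, that
`a (2c - a - b)³ = c (2a - b - c)³` and `b (2c - a - b)³ = -c (a - 2b + c)³`, which is the
parametrization after dividing by `(2c - a - b)³`. The denominator vanishes only when
`c² = ab` and `a + b = 2c`, i.e. `a = b = c`. Uniqueness holds because cubing is injective. -/

section Parametrization

variable {K : Type*} [Field K]

theorem eq_and_eq_of_add_eq_two_mul [CharZero K] {a b c : K} (hc : c ≠ 0)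
    (heq : (a + b + c) ^ 3 = 27 * (a * b * c)) (h2c : 2 * c - a - b = 0) :
    a = b ∧ b = c := by
  have hsq : c ^ 2 = a * b := by
    have h : 27 * c * (c ^ 2 - a * b) = 0 := by
      linear_combination heq + (9 * c ^ 2 + 3 * c * (a + b + c) + (a + b + c) ^ 2) * h2c
    have h27c : (27 : K) * c ≠ 0 := mul_ne_zero (by norm_num) hc
    linear_combination (mul_eq_zero.mp h).resolve_left h27c
  have hsub : (a - b) ^ 2 = 0 := by linear_combination 4 * hsq - (a + b + 2 * c) * h2c
  have hab : a = b := sub_eq_zero.mp (pow_eq_zero_iff two_ne_zero |>.mp hsub)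
  exact ⟨hab, by linear_combination (-h2c - hab) / 2⟩

variable {a b c : K} (heq : (a + b + c) ^ 3 = 27 * (a * b * c)) (hd : 2 * c - a - b ≠ 0)
include heq hd

theorem eq_mul_sub_one_pow_three_of_cube_eq :
    a = c * ((a - 2 * b + c) / (2 * c - a - b) - 1) ^ 3 := by
  rw [div_sub_one hd, div_pow, mul_div_assoc', eq_div_iff (pow_ne_zero 3 hd)]
  linear_combination (c - a) * heq

theorem eq_neg_mul_pow_three_of_cube_eq :
    b = -c * ((a - 2 * b + c) / (2 * c - a - b)) ^ 3 := by
  rw [div_pow, mul_div_assoc', eq_div_iff (pow_ne_zero 3 hd)]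
  linear_combination (c - b) * heq

end Parametrization

theorem stmt_3 (a b c : ℚ) (ha : a ≠ 0) (hb : b ≠ 0) (hc : c ≠ 0)
    (heq : (a + b + c) ^ 3 = 27 * (a * b * c)) (hne : ¬(a = b ∧ b = c)) :
    ∃! t : ℚ, t ≠ 0 ∧ t ≠ 1 ∧ a = c * (t - 1) ^ 3 ∧ b = -c * t ^ 3 := by
  have hd : 2 * c - a - b ≠ 0 := fun h => hne (eq_and_eq_of_add_eq_two_mul hc heq h)
  obtain ⟨t, hat, hbt⟩ : ∃ t : ℚ, a = c * (t - 1) ^ 3 ∧ b = -c * t ^ 3 :=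
    ⟨_, eq_mul_sub_one_pow_three_of_cube_eq heq hd, eq_neg_mul_pow_three_of_cube_eq heq hd⟩
  refine ⟨t, ⟨?_, ?_, hat, hbt⟩, ?_⟩
  · rintro rfl
    exact hb (by simpa using hbt)
  · rintro rfl
    exact ha (by simpa using hat)
  · rintro s ⟨-, -, -, hbs⟩
    refine (Odd.pow_inj (n := 3) (by decide)).mp (mul_left_cancel₀ (neg_ne_zero.mpr hc) ?_)
    rw [← hbs, hbt]
end

section
/- Let c ∈ ℚ*, t ∈ ℚ \ {-1, 0, 1/2, 1, 2}, a = c(t-1)³, b = -ct³. There are infinitely many triples (x,y,z) of rational numbers with x + y + z = a + b + c and xyz = abc. -/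
/-!
With `u = c t (1 - t)` one has `a + b + c = 3u` and `abc = u³`, because `(a, b, c)` is the member
`w = c`, `d = t` of the family `(w (d - 1)³, -w d³, w)`, whose sum is `3 w d (1 - d)` and whose
product is `(w d (1 - d))³`. The curve `x + y + z = 3u`, `xyz = u³` is a nodal cubic (node at
`(u, u, u)`), and taking `w = u / (d (1 - d))` runs through infinitely many of its rational points
as `d` ranges over `ℚ \ {0, 1}`: the parameter is recovered from `y / z = -d³`.
-/

section NodalParam

variable {R : Type*} [CommRing R]

def nodalParam (w d : R) : R × R × R := (w * (d - 1) ^ 3, -w * d ^ 3, w)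

lemma nodalParam_sum (w d : R) :
    (nodalParam w d).1 + (nodalParam w d).2.1 + (nodalParam w d).2.2 = 3 * (w * d * (1 - d)) := by
  simp only [nodalParam]
  ring

lemma nodalParam_prod (w d : R) :
    (nodalParam w d).1 * (nodalParam w d).2.1 * (nodalParam w d).2.2 = (w * d * (1 - d)) ^ 3 := by
  simp only [nodalParam]
  ring

end NodalParam

lemma infinite_setOf_sum_eq_three_mul_and_prod_eq_cube {K : Type*} [Field K] [LinearOrder K]
    [IsStrictOrderedRing K] {u : K} (hu : u ≠ 0) :
    {p : K × K × K | p.1 + p.2.1 + p.2.2 = 3 * u ∧ p.1 * p.2.1 * p.2.2 = u ^ 3}.Infinite := by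
  have hden : ∀ d ∈ ({0, 1} : Set K)ᶜ, d * (1 - d) ≠ 0 := by
    rintro d hd
    simp only [Set.mem_compl_iff, Set.mem_insert_iff, Set.mem_singleton_iff, not_or] at hd
    exact mul_ne_zero hd.1 (sub_ne_zero.2 (Ne.symm hd.2))
  refine Set.infinite_of_injOn_mapsTo (f := fun d => nodalParam (u / (d * (1 - d))) d)
    (s := ({0, 1} : Set K)ᶜ) ?_ ?_ ((Set.toFinite _).infinite_compl)
  · rintro d hd e - hde
    obtain ⟨-, hy, hz⟩ : _ ∧ u / (d * (1 - d)) * d ^ 3 = u / (e * (1 - e)) * e ^ 3 ∧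
        u / (d * (1 - d)) = u / (e * (1 - e)) := by
      simpa [nodalParam] using hde
    rw [← hz] at hy
    exact (Odd.pow_inj (by decide)).1 (mul_left_cancel₀ (div_ne_zero hu (hden d hd)) hy)
  · rintro d hd
    have hw : u / (d * (1 - d)) * d * (1 - d) = u := by
      rw [mul_assoc, div_mul_cancel₀ u (hden d hd)]
    exact ⟨by rw [nodalParam_sum, hw], by rw [nodalParam_prod, hw]⟩

theorem stmt_6 (c t : ℚ) (hc : c ≠ 0)
    (ht : t ≠ -1 ∧ t ≠ 0 ∧ t ≠ 1/2 ∧ t ≠ 1 ∧ t ≠ 2)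
    (a b : ℚ) (ha : a = c * (t - 1) ^ 3) (hb : b = -c * t ^ 3) :
    {p : ℚ × ℚ × ℚ | p.1 + p.2.1 + p.2.2 = a + b + c ∧
      p.1 * p.2.1 * p.2.2 = a * b * c}.Infinite := by
  obtain ⟨-, ht0, -, ht1, -⟩ := ht
  have hu : c * t * (1 - t) ≠ 0 :=
    mul_ne_zero (mul_ne_zero hc ht0) (sub_ne_zero.2 (Ne.symm ht1))
  have habc : (a, b, c) = nodalParam c t := by rw [ha, hb, nodalParam]
  have hsum : a + b + c = 3 * (c * t * (1 - t)) := by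
    simpa only [← habc] using nodalParam_sum c t
  have hprod : a * b * c = (c * t * (1 - t)) ^ 3 := by
    simpa only [← habc] using nodalParam_prod c t
  rw [hsum, hprod]
  exact infinite_setOf_sum_eq_three_mul_and_prod_eq_cube hu
end

section
/- Let a, b, c be rational with s = a+b+c, p = abc ≠ 0. If x, y, z are rationals with x + y + z = s, xyz = p, then u = -p/y + s²/12 and v = -(p/y)(x + y/2 - s/2) satisfy v² = u³ - (s⁴/48 - sp/2)u + (s⁶/864 - s³p/24 + p²/4), and u ≠ s²/12. -/
/-! Since `p / y = x z` and `x + y/2 - s/2 = (x - z)/2`, the point is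
`(s²/12 - x z, -x z (x - z)/2)`, and the curve equation becomes a polynomial identity
in `x, y, z` once `s = x + y + z` and `p = x y z` are substituted. -/

theorem curve_eq_of_sum_prod {K : Type*} [Field K] [CharZero K] {x y z s p : K}
    (hs : x + y + z = s) (hp : x * y * z = p) :
    (-(x * z) * ((x - z) / 2)) ^ 2 = (-(x * z) + s ^ 2 / 12) ^ 3 -
      (s ^ 4 / 48 - s * p / 2) * (-(x * z) + s ^ 2 / 12) +
      (s ^ 6 / 864 - s ^ 3 * p / 24 + p ^ 2 / 4) := by
  subst hs hp
  field_simp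
  ring

theorem stmt_8_general (s p : ℚ) (hp0 : p ≠ 0)
    (x y z : ℚ) (hsum : x + y + z = s) (hprod : x * y * z = p)
    (u v : ℚ) (hu : u = -p / y + s ^ 2 / 12)
    (hv : v = -(p / y) * (x + y / 2 - s / 2)) :
    v ^ 2 = u ^ 3 - (s ^ 4 / 48 - s * p / 2) * u +
      (s ^ 6 / 864 - s ^ 3 * p / 24 + p ^ 2 / 4) ∧ u ≠ s ^ 2 / 12 := by
  have hy : y ≠ 0 := by rintro rfl; simp [← hprod] at hp0
  have hq : p / y = x * z := by rw [← hprod]; field_simp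
  have hx : x + y / 2 - s / 2 = (x - z) / 2 := by rw [← hsum]; ring
  rw [neg_div] at hu
  refine ⟨?_, ?_⟩
  · rw [hu, hv, hq, hx]
    exact curve_eq_of_sum_prod hsum hprod
  · rw [hu, Ne, add_eq_right, neg_eq_zero]
    exact div_ne_zero hp0 hy

theorem stmt_8 (a b c : ℚ) (s p : ℚ)
    (hs : s = a + b + c) (hp : p = a * b * c) (hp0 : p ≠ 0)
    (x y z : ℚ) (hsum : x + y + z = s) (hprod : x * y * z = p)
    (u v : ℚ) (hu : u = -p / y + s ^ 2 / 12)
    (hv : v = -(p / y) * (x + y / 2 - s / 2)) :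
    v ^ 2 = u ^ 3 - (s ^ 4 / 48 - s * p / 2) * u +
      (s ^ 6 / 864 - s ^ 3 * p / 24 + p ^ 2 / 4) ∧ u ≠ s ^ 2 / 12 :=
  stmt_8_general s p hp0 x y z hsum hprod u v hu hv
end

section
/- Let a, b, c be rational with s = a+b+c and p = abc ≠ 0. If u, v are rational with v² = u³ - (s⁴/48 - sp/2)u + (s⁶/864 - s³p/24 + p²/4) and u ≠ s²/12, then x = (v + su/2 - s³/24 + p/2)/(u - s²/12), y = -p/(u - s²/12), z = (-v + su/2 - s³/24 + p/2)/(u - s²/12) satisfy x + y + z = s and xyz = p. -/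
/-!
Write `d = u - s²/12` and `w = s u/2 - s³/24 + p/2`. The curve equation says exactly
`v² = d³ + w²`, and then `x = (w + v)/d`, `y = -p/d`, `z = (w - v)/d` give
`x y z = -p (w² - v²)/d³ = p` and `x + y + z = (2w - p)/d = s`.
-/

section
variable {K : Type*} [Field K]

theorem sq_eq_weierstrass_iff [CharZero K] (s p u v : K) :
    v ^ 2 = u ^ 3 - (s ^ 4 / 48 - s * p / 2) * u + (s ^ 6 / 864 - s ^ 3 * p / 24 + p ^ 2 / 4) ↔
      v ^ 2 = (u - s ^ 2 / 12) ^ 3 + (s * u / 2 - s ^ 3 / 24 + p / 2) ^ 2 := by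
  constructor <;> intro h <;> linear_combination h

theorem div_mul_div_mul_div_of_sq_eq_cube_add_sq {d v w : K} (hd : d ≠ 0)
    (h : v ^ 2 = d ^ 3 + w ^ 2) (t : K) :
    (w + v) / d * (-t / d) * ((w - v) / d) = t := by
  field_simp
  linear_combination t * h

end

theorem stmt_9_general (s p : ℚ)
    (u v : ℚ)
    (hcurve : v ^ 2 = u ^ 3 - (s ^ 4 / 48 - s * p / 2) * u +
      (s ^ 6 / 864 - s ^ 3 * p / 24 + p ^ 2 / 4))
    (hu : u ≠ s ^ 2 / 12)
    (x y z : ℚ)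
    (hx : x = (v + s * u / 2 - s ^ 3 / 24 + p / 2) / (u - s ^ 2 / 12))
    (hy : y = -p / (u - s ^ 2 / 12))
    (hz : z = (-v + s * u / 2 - s ^ 3 / 24 + p / 2) / (u - s ^ 2 / 12)) :
    x + y + z = s ∧ x * y * z = p := by
  have hd : u - s ^ 2 / 12 ≠ 0 := sub_ne_zero.mpr hu
  have hprod := div_mul_div_mul_div_of_sq_eq_cube_add_sq hd
    ((sq_eq_weierstrass_iff s p u v).mp hcurve) p
  subst hx hy hz
  constructor
  · rw [← add_div, ← add_div, div_eq_iff hd]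
    ring
  · convert hprod using 3 <;> ring

theorem stmt_9 (a b c : ℚ) (s p : ℚ)
    (hs : s = a + b + c) (hp : p = a * b * c) (hp0 : p ≠ 0)
    (u v : ℚ)
    (hcurve : v ^ 2 = u ^ 3 - (s ^ 4 / 48 - s * p / 2) * u +
      (s ^ 6 / 864 - s ^ 3 * p / 24 + p ^ 2 / 4))
    (hu : u ≠ s ^ 2 / 12)
    (x y z : ℚ)
    (hx : x = (v + s * u / 2 - s ^ 3 / 24 + p / 2) / (u - s ^ 2 / 12))
    (hy : y = -p / (u - s ^ 2 / 12))
    (hz : z = (-v + s * u / 2 - s ^ 3 / 24 + p / 2) / (u - s ^ 2 / 12)) :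
    x + y + z = s ∧ x * y * z = p :=
  stmt_9_general s p u v hcurve hu x y z hx hy hz
end

section
/- On the elliptic curve E over ℚ given by v² = u³ - (s⁴/48 - sp/2)u + (s⁶/864 - s³p/24 + p²/4) with s = a+b+c, p = abc ≠ 0 and s³ ≠ 27p, the point Q = (s²/12, p/2) has order exactly 3. -/
/-!
Since `p ≠ 0`, the tangent to `E` at `Q = (s²/12, p/2)` is not vertical; its slope is `s/2`, and
the doubling formula returns the abscissa `(s/2)² - 2 · s²/12 = s²/12`. So `Q` is a flex:
`2Q = -Q`, hence `3Q = 0` with `Q ≠ 0`.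
-/

namespace WeierstrassCurve.Affine

variable {F : Type*} [Field F]

theorem Point.addOrderOf_some_eq_three_of_addX_eq [DecidableEq F] {W : Affine F} {x y : F}
    (h : W.Nonsingular x y) (hy : y ≠ W.negY x y) (hx : W.addX x x (W.slope x x y y) = x) :
    addOrderOf (some _ _ h) = 3 := by
  have : Fact (Nat.Prime 3) := ⟨Nat.prime_three⟩
  have hdouble : some _ _ h + some _ _ h = -some _ _ h := by
    rw [add_self_of_Y_ne' hy]
    congr 2
    simp only [negAddY, hx, sub_self, mul_zero, zero_add]
  refine addOrderOf_eq_prime ?_ (by simp)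
  rw [succ_nsmul, two_nsmul, hdouble, neg_add_cancel]

def sumProdCurve (s p : F) : Affine F :=
  { a₁ := 0, a₂ := 0, a₃ := 0,
    a₄ := -(s ^ 4 / 48 - s * p / 2),
    a₆ := s ^ 6 / 864 - s ^ 3 * p / 24 + p ^ 2 / 4 }

variable [CharZero F] {s p : F}

theorem sumProdCurve_Y_ne_negY (hp : p ≠ 0) :
    p / 2 ≠ (sumProdCurve s p).negY (s ^ 2 / 12) (p / 2) := by
  simp only [negY, sumProdCurve]
  intro h
  exact hp (by linear_combination h)

theorem sumProdCurve_slope [DecidableEq F] (hp : p ≠ 0) :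
    (sumProdCurve s p).slope (s ^ 2 / 12) (s ^ 2 / 12) (p / 2) (p / 2) = s / 2 := by
  rw [slope_of_Y_ne rfl (sumProdCurve_Y_ne_negY hp)]
  simp only [negY, sumProdCurve]
  field_simp
  ring

theorem sumProdCurve_addX :
    (sumProdCurve s p).addX (s ^ 2 / 12) (s ^ 2 / 12) (s / 2) = s ^ 2 / 12 := by
  simp only [addX, sumProdCurve]
  ring

end WeierstrassCurve.Affine

open WeierstrassCurve.Affine in
theorem stmt_12 (a b c : ℚ) (s p : ℚ)
    (hs : s = a + b + c) (hp : p = a * b * c) (hp0 : p ≠ 0)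
    (hns : s ^ 3 ≠ 27 * p)
    (W : WeierstrassCurve.Affine ℚ)
    (hW : W = { a₁ := 0, a₂ := 0, a₃ := 0,
                a₄ := -(s ^ 4 / 48 - s * p / 2),
                a₆ := s ^ 6 / 864 - s ^ 3 * p / 24 + p ^ 2 / 4 })
    (hQ : W.Nonsingular (s ^ 2 / 12) (p / 2)) :
    addOrderOf (WeierstrassCurve.Affine.Point.some _ _ hQ) = 3 := by
  obtain rfl : W = sumProdCurve s p := hW
  refine Point.addOrderOf_some_eq_three_of_addX_eq hQ (sumProdCurve_Y_ne_negY hp0) ?_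
  rw [sumProdCurve_slope hp0, sumProdCurve_addX]
end

section
/- For any r ∈ ℚ* and t ∈ ℚ \ {-1, -1/2, 0}, the numbers a = r(t+1)³, b = -rt³, c = -rt(t+1)(2t²+2t+1) are nonzero, pairwise distinct, and satisfy a(b-c)³ = b(c-a)³. -/
/-! The differences `a - b`, `b - c`, `a - c` are `1`, `t`, `t + 1` times the common factor
`r (2t + 1) (t² + t + 1)`, while `a` and `b` are `r (t + 1)³` and `-r t³`; so both sides of
`a (b - c)³ = b (c - a)³` equal `r t³ (t + 1)³` times the cube of the common factor.
Nonvanishing reduces to that of the linear factors, since `t² + t + 1` and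
`2t² + 2t + 1 = t² + (t + 1)²` are positive. -/

namespace CubicTriple

variable {R : Type*}

section CommRing

variable [CommRing R] (r t : R)

def a : R := r * (t + 1) ^ 3

def b : R := -r * t ^ 3

def c : R := -r * t * (t + 1) * (2 * t ^ 2 + 2 * t + 1)

theorem a_sub_b : a r t - b r t = r * (2 * t + 1) * (t ^ 2 + t + 1) := by
  unfold a b; ring

theorem b_sub_c : b r t - c r t = t * (r * (2 * t + 1) * (t ^ 2 + t + 1)) := by
  unfold b c; ring

theorem a_sub_c : a r t - c r t = (t + 1) * (r * (2 * t + 1) * (t ^ 2 + t + 1)) := by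
  unfold a c; ring

theorem a_mul_sub_pow_three : a r t * (b r t - c r t) ^ 3 = b r t * (c r t - a r t) ^ 3 := by
  rw [b_sub_c, ← neg_sub, a_sub_c]
  unfold a b; ring

end CommRing

section NoZeroDivisors

variable [CommRing R] [NoZeroDivisors R] {r t : R}

theorem a_ne_zero (hr : r ≠ 0) (h1 : t + 1 ≠ 0) : a r t ≠ 0 :=
  mul_ne_zero hr (pow_ne_zero 3 h1)

theorem b_ne_zero (hr : r ≠ 0) (h0 : t ≠ 0) : b r t ≠ 0 :=
  mul_ne_zero (neg_ne_zero.mpr hr) (pow_ne_zero 3 h0)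

end NoZeroDivisors

section Ordered

variable [CommRing R] [LinearOrder R] [IsStrictOrderedRing R] {r t : R}

theorem sq_add_self_add_one_pos (t : R) : 0 < t ^ 2 + t + 1 := by
  nlinarith [sq_nonneg (t + 1), sq_nonneg t]

theorem two_mul_sq_add_two_mul_add_one_pos (t : R) : 0 < 2 * t ^ 2 + 2 * t + 1 := by
  nlinarith [sq_nonneg (t + 1), sq_nonneg t]

theorem common_factor_ne_zero (hr : r ≠ 0) (h2 : 2 * t + 1 ≠ 0) :
    r * (2 * t + 1) * (t ^ 2 + t + 1) ≠ 0 :=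
  mul_ne_zero (mul_ne_zero hr h2) (sq_add_self_add_one_pos t).ne'

theorem c_ne_zero (hr : r ≠ 0) (h0 : t ≠ 0) (h1 : t + 1 ≠ 0) : c r t ≠ 0 :=
  mul_ne_zero (mul_ne_zero (mul_ne_zero (neg_ne_zero.mpr hr) h0) h1)
    (two_mul_sq_add_two_mul_add_one_pos t).ne'

theorem a_ne_b (hr : r ≠ 0) (h2 : 2 * t + 1 ≠ 0) : a r t ≠ b r t :=
  sub_ne_zero.mp <| (a_sub_b r t).symm ▸ common_factor_ne_zero hr h2

theorem b_ne_c (hr : r ≠ 0) (h0 : t ≠ 0) (h2 : 2 * t + 1 ≠ 0) : b r t ≠ c r t :=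
  sub_ne_zero.mp <| (b_sub_c r t).symm ▸ mul_ne_zero h0 (common_factor_ne_zero hr h2)

theorem a_ne_c (hr : r ≠ 0) (h1 : t + 1 ≠ 0) (h2 : 2 * t + 1 ≠ 0) : a r t ≠ c r t :=
  sub_ne_zero.mp <| (a_sub_c r t).symm ▸ mul_ne_zero h1 (common_factor_ne_zero hr h2)

end Ordered

end CubicTriple

theorem stmt_14 (r t : ℚ) (hr : r ≠ 0) (ht : t ≠ -1 ∧ t ≠ -1/2 ∧ t ≠ 0)
    (a b c : ℚ) (ha : a = r * (t + 1) ^ 3) (hb : b = -r * t ^ 3)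
    (hc : c = -r * t * (t + 1) * (2 * t ^ 2 + 2 * t + 1)) :
    a ≠ 0 ∧ b ≠ 0 ∧ c ≠ 0 ∧ a ≠ b ∧ b ≠ c ∧ a ≠ c ∧
      a * (b - c) ^ 3 = b * (c - a) ^ 3 := by
  obtain ⟨ht1, ht2, h0⟩ := ht
  have h1 : t + 1 ≠ 0 := fun h => ht1 (by linarith)
  have h2 : 2 * t + 1 ≠ 0 := fun h => ht2 (by linarith)
  obtain rfl : a = CubicTriple.a r t := ha
  obtain rfl : b = CubicTriple.b r t := hb
  obtain rfl : c = CubicTriple.c r t := hc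
  exact ⟨CubicTriple.a_ne_zero hr h1, CubicTriple.b_ne_zero hr h0, CubicTriple.c_ne_zero hr h0 h1,
    CubicTriple.a_ne_b hr h2, CubicTriple.b_ne_c hr h0 h2, CubicTriple.a_ne_c hr h1 h2,
    CubicTriple.a_mul_sub_pow_three r t⟩
end

section
/- If a, b, c are pairwise distinct nonzero rational numbers with a(b-c)³ = b(c-a)³, then setting t = (b-c)/(a-b) and r = a/(t+1)³, one has t ∈ ℚ \ {-1, -1/2, 0}, b = -rt³ and c = -rt(t+1)(2t²+2t+1); moreover (r,t) is the unique such pair. -/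
/-!
With `u = a - b` one has `b - c = t u` and `c - a = -(t + 1) u`, so after cancelling `u³` the
relation `a (b - c)³ = b (c - a)³` becomes `a t³ + b (t + 1)³ = 0`. This gives `b = -r t³`, and then
`c = b - t u` yields the formula for `c`. Conversely every such parametrization satisfies
`b - c = t (a - b)`, which determines `t`, and `a = r (t + 1)³` then determines `r`.
-/

section Parametrization

variable {K : Type*} [Field K]

lemma mul_cube_add_mul_cube_eq_zero {a b c t : K} (hab : a ≠ b) (ht : t * (a - b) = b - c)
    (heq : a * (b - c) ^ 3 = b * (c - a) ^ 3) : a * t ^ 3 + b * (t + 1) ^ 3 = 0 := by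
  have hca : c - a = -((t + 1) * (a - b)) := by linear_combination ht
  rw [← ht, hca] at heq
  have h : (a * t ^ 3 + b * (t + 1) ^ 3) * (a - b) ^ 3 = 0 := by linear_combination heq
  exact (mul_eq_zero.mp h).resolve_right (pow_ne_zero 3 (sub_ne_zero.mpr hab))

lemma eq_param_of_mul_cube_add_mul_cube_eq_zero {a b c t r : K} (ht1 : t + 1 ≠ 0)
    (ht : t * (a - b) = b - c) (hcubic : a * t ^ 3 + b * (t + 1) ^ 3 = 0)
    (ha : a = r * (t + 1) ^ 3) :
    b = -r * t ^ 3 ∧ c = -r * t * (t + 1) * (2 * t ^ 2 + 2 * t + 1) := by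
  have hb : b = -r * t ^ 3 :=
    mul_right_cancel₀ (pow_ne_zero 3 ht1) (by linear_combination hcubic - t ^ 3 * ha)
  exact ⟨hb, by linear_combination ht + (1 + t) * hb - t * ha⟩

lemma param_sub_eq_mul_sub (r t : K) :
    -r * t ^ 3 - -r * t * (t + 1) * (2 * t ^ 2 + 2 * t + 1) =
      t * (r * (t + 1) ^ 3 - -r * t ^ 3) := by
  ring

end Parametrization

theorem stmt_15_general (a b c : ℚ)
    (hab : a ≠ b) (hbc : b ≠ c) (hac : a ≠ c)
    (heq : a * (b - c) ^ 3 = b * (c - a) ^ 3)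
    (t r : ℚ) (ht : t = (b - c) / (a - b)) (hr : r = a / (t + 1) ^ 3) :
    t ≠ -1 ∧ t ≠ -1/2 ∧ t ≠ 0 ∧ b = -r * t ^ 3 ∧
      c = -r * t * (t + 1) * (2 * t ^ 2 + 2 * t + 1) ∧
      ∀ r' t' : ℚ, r' ≠ 0 → t' ≠ -1 → t' ≠ -1/2 → t' ≠ 0 →
        a = r' * (t' + 1) ^ 3 → b = -r' * t' ^ 3 →
        c = -r' * t' * (t' + 1) * (2 * t' ^ 2 + 2 * t' + 1) →
        r' = r ∧ t' = t := by
  have hab' : a - b ≠ 0 := sub_ne_zero.mpr hab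
  have hlin : t * (a - b) = b - c := by rw [ht]; exact div_mul_cancel₀ _ hab'
  have hcubic := mul_cube_add_mul_cube_eq_zero hab hlin heq
  have ht0 : t ≠ 0 := by rintro rfl; exact hbc (by linear_combination -hlin)
  have ht1 : t ≠ -1 := by rintro rfl; exact hac (by linear_combination -hlin)
  have ht2 : t ≠ -1/2 := by rintro rfl; exact hab (by linear_combination -8 * hcubic)
  have hsucc : t + 1 ≠ 0 := fun h => ht1 (by linear_combination h)
  have hpow : (t + 1) ^ 3 ≠ 0 := pow_ne_zero 3 hsucc
  have ha : a = r * (t + 1) ^ 3 := by rw [hr, div_mul_cancel₀ _ hpow]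
  obtain ⟨hb, hc⟩ := eq_param_of_mul_cube_add_mul_cube_eq_zero hsucc hlin hcubic ha
  refine ⟨ht1, ht2, ht0, hb, hc, fun r' t' _ _ _ _ ha' hb' hc' => ?_⟩
  obtain rfl : t' = t := mul_right_cancel₀ hab' <| by
    rw [hlin, ha', hb', hc', param_sub_eq_mul_sub]
  exact ⟨mul_right_cancel₀ hpow (ha'.symm.trans ha), rfl⟩

theorem stmt_15 (a b c : ℚ) (ha : a ≠ 0) (hb : b ≠ 0) (hc : c ≠ 0)
    (hab : a ≠ b) (hbc : b ≠ c) (hac : a ≠ c)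
    (heq : a * (b - c) ^ 3 = b * (c - a) ^ 3)
    (t r : ℚ) (ht : t = (b - c) / (a - b)) (hr : r = a / (t + 1) ^ 3) :
    t ≠ -1 ∧ t ≠ -1/2 ∧ t ≠ 0 ∧ b = -r * t ^ 3 ∧
      c = -r * t * (t + 1) * (2 * t ^ 2 + 2 * t + 1) ∧
      ∀ r' t' : ℚ, r' ≠ 0 → t' ≠ -1 → t' ≠ -1/2 → t' ≠ 0 →
        a = r' * (t' + 1) ^ 3 → b = -r' * t' ^ 3 →
        c = -r' * t' * (t' + 1) * (2 * t' ^ 2 + 2 * t' + 1) →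
        r' = r ∧ t' = t :=
  stmt_15_general a b c hab hbc hac heq t r ht hr
end

section
/- For any r ∈ ℚ* and t ∈ ℚ \ {-1, 0}, the numbers a = rt², b = -r(t+1), c = rt(t+1)² are nonzero, pairwise distinct, and satisfy ab² + bc² + ca² = 3abc. -/
/-! Each of a - b, b - c, a - c is, up to sign, one of r, r(t + 1), rt times t² + t + 1, and
4(t² + t + 1) = (2t + 1)² + 3 has no rational root; the cubic relation is a polynomial identity
in r and t. -/

theorem sq_add_self_add_one_pos {R : Type*} [CommRing R] [LinearOrder R] [IsStrictOrderedRing R]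
    (t : R) : 0 < t ^ 2 + t + 1 := by
  nlinarith [sq_nonneg (2 * t + 1)]

theorem mul_sq_add_mul_sq_add_mul_sq_eq_three_mul_of_param {R : Type*} [CommRing R] (r t : R) :
    let a := r * t ^ 2
    let b := -r * (t + 1)
    let c := r * t * (t + 1) ^ 2
    a * b ^ 2 + b * c ^ 2 + c * a ^ 2 = 3 * (a * b * c) := by
  ring

theorem stmt_16 (r t : ℚ) (hr : r ≠ 0) (ht1 : t ≠ -1) (ht0 : t ≠ 0)
    (a b c : ℚ) (ha : a = r * t ^ 2) (hb : b = -r * (t + 1))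
    (hc : c = r * t * (t + 1) ^ 2) :
    a ≠ 0 ∧ b ≠ 0 ∧ c ≠ 0 ∧ a ≠ b ∧ b ≠ c ∧ a ≠ c ∧
      a * b ^ 2 + b * c ^ 2 + c * a ^ 2 = 3 * (a * b * c) := by
  have hq : t ^ 2 + t + 1 ≠ 0 := (sq_add_self_add_one_pos t).ne'
  have hs : t + 1 ≠ 0 := by rwa [Ne, add_eq_zero_iff_eq_neg]
  subst ha hb hc
  refine ⟨by positivity, mul_ne_zero (neg_ne_zero.2 hr) hs, by positivity, ?_, ?_, ?_,
    mul_sq_add_mul_sq_add_mul_sq_eq_three_mul_of_param r t⟩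
  · rw [← sub_ne_zero, show r * t ^ 2 - -r * (t + 1) = r * (t ^ 2 + t + 1) by ring]
    exact mul_ne_zero hr hq
  · rw [← sub_ne_zero,
      show -r * (t + 1) - r * t * (t + 1) ^ 2 = -(r * (t + 1) * (t ^ 2 + t + 1)) by ring]
    exact neg_ne_zero.2 (mul_ne_zero (mul_ne_zero hr hs) hq)
  · rw [← sub_ne_zero, show r * t ^ 2 - r * t * (t + 1) ^ 2 = -(r * t * (t ^ 2 + t + 1)) by ring]
    exact neg_ne_zero.2 (mul_ne_zero (mul_ne_zero hr ht0) hq)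
end

section
/- If a, b, c are pairwise distinct nonzero rational numbers with ab² + bc² + ca² = 3abc, then there exist unique r ∈ ℚ* and t ∈ ℚ \ {-1, 0} with (a, b, c) = (rt², -r(t+1), rt(t+1)²). -/
/-! Writing `c - a = t (a - b)`, the cubic `ab² + bc² + ca² - 3abc` becomes
`(a - b)² (bt² + at + a)`, so for `a ≠ b` the equation says `bt² = -a(t + 1)`; with
`r = a / t²` this is exactly the stated parametrization. Conversely every parametrized
triple satisfies `c - a = t (a - b)`, which determines `t`, and then `a = rt²` determines `r`. -/

section
variable {K : Type*} [Field K]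

lemma cyclic_cubic_eq_of_sub_eq_mul_sub {a b c t : K} (ht : c - a = t * (a - b)) :
    a * b ^ 2 + b * c ^ 2 + c * a ^ 2 - 3 * (a * b * c) = (a - b) ^ 2 * (b * t ^ 2 + a * t + a) := by
  obtain rfl : c = a + t * (a - b) := by linear_combination ht
  ring

lemma sub_eq_mul_sub_of_eq_param {a b c r t : K} (ha : a = r * t ^ 2) (hb : b = -r * (t + 1))
    (hc : c = r * t * (t + 1) ^ 2) : c - a = t * (a - b) := by
  subst ha hb hc
  ring

lemma eq_param_of_quadratic {a b c t : K} (ht0 : t ≠ 0) (ht : c - a = t * (a - b))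
    (hquad : b * t ^ 2 + a * t + a = 0) :
    b = -(a / t ^ 2) * (t + 1) ∧ c = a / t ^ 2 * t * (t + 1) ^ 2 := by
  constructor
  · field_simp
    linear_combination hquad
  · field_simp
    linear_combination t * ht - hquad

end

theorem stmt_17_general (a b c : ℚ) (ha : a ≠ 0)
    (hab : a ≠ b) (hbc : b ≠ c) (hac : a ≠ c)
    (heq : a * b ^ 2 + b * c ^ 2 + c * a ^ 2 = 3 * (a * b * c)) :
    ∃! rt : ℚ × ℚ, rt.1 ≠ 0 ∧ rt.2 ≠ -1 ∧ rt.2 ≠ 0 ∧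
      a = rt.1 * rt.2 ^ 2 ∧ b = -rt.1 * (rt.2 + 1) ∧
      c = rt.1 * rt.2 * (rt.2 + 1) ^ 2 := by
  have hab' : a - b ≠ 0 := sub_ne_zero.mpr hab
  set t := (c - a) / (a - b)
  have ht : c - a = t * (a - b) := (div_mul_cancel₀ _ hab').symm
  have ht0 : t ≠ 0 := div_ne_zero (sub_ne_zero.mpr hac.symm) hab'
  have ht1 : t ≠ -1 := fun h => hbc (by rw [h] at ht; linear_combination -ht)
  have hquad : b * t ^ 2 + a * t + a = 0 := by
    have := cyclic_cubic_eq_of_sub_eq_mul_sub ht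
    rw [heq, sub_self] at this
    exact (mul_eq_zero.mp this.symm).resolve_left (pow_ne_zero 2 hab')
  obtain ⟨hb, hc⟩ := eq_param_of_quadratic ht0 ht hquad
  refine ⟨(a / t ^ 2, t), ⟨div_ne_zero ha (pow_ne_zero 2 ht0), ht1, ht0,
    (div_mul_cancel₀ a (pow_ne_zero 2 ht0)).symm, hb, hc⟩, ?_⟩
  rintro ⟨r', t'⟩ ⟨-, -, ht0', ha', hb', hc'⟩
  have htt : t' = t := mul_right_cancel₀ hab' ((sub_eq_mul_sub_of_eq_param ha' hb' hc').symm.trans ht)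
  subst htt
  exact Prod.ext (eq_div_of_mul_eq (pow_ne_zero 2 ht0') ha'.symm) rfl

theorem stmt_17 (a b c : ℚ) (ha : a ≠ 0) (hb : b ≠ 0) (hc : c ≠ 0)
    (hab : a ≠ b) (hbc : b ≠ c) (hac : a ≠ c)
    (heq : a * b ^ 2 + b * c ^ 2 + c * a ^ 2 = 3 * (a * b * c)) :
    ∃! rt : ℚ × ℚ, rt.1 ≠ 0 ∧ rt.2 ≠ -1 ∧ rt.2 ≠ 0 ∧
      a = rt.1 * rt.2 ^ 2 ∧ b = -rt.1 * (rt.2 + 1) ∧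
      c = rt.1 * rt.2 * (rt.2 + 1) ^ 2 :=
  stmt_17_general a b c ha hab hbc hac heq
end
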